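/- Let h > 0, p, d ≥ 1, A(λ) = I_d λ^p + A_1 λ^{p−1} + … + A_p with A_1,…,A_p ∈ ℂ^{d×d}, and let R_1,…,R_p ∈ ℂ^{d×d} be right solvents of A(λ) with σ(A(·)) = ⋃_{k=1}^p σ(R_k). Suppose the block Vandermonde matrix V(e^{−hR_1},…,e^{−hR_p}) is invertible, and define Ψ(λ) = I_d λ^p + Ψ_1 λ^{p−1} + … + Ψ_p by [Ψ_p, …, Ψ_1] = −[e^{−phR_1}, …, e^{−phR_p}] V(e^{−hR_1},…,e^{−hR_p})^{−1}. Then σ(Ψ(·)) = {e^{−hλ} : λ ∈ σ(A(·))}. In particular, if every λ ∈ σ(A(·)) has Re λ < 0, then every μ ∈ σ(Ψ(·)) satisfies |μ| > 1, i.e. Ψ(λ) is Schur-stable. -/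

import Mathlib

open Matrix

abbrev Mat (d e : ℕ) := Matrix (Fin d) (Fin e) ℂ

/-- Evaluation of the monic λ-matrix `P(λ) = I_d λ^p + P_1 λ^{p-1} + … + P_p`,
where `P i` denotes `P_{i+1}`. -/
noncomputable def monicPoly (p d : ℕ) (P : Fin p → Mat d d) (z : ℂ) : Mat d d :=
  z ^ p • 1 + ∑ i : Fin p, z ^ (p - 1 - (i : ℕ)) • P i

/-- `R` is a right solvent of `I_d λ^p + A_1 λ^{p-1} + … + A_p`, where `A i = A_{i+1}`. -/
def IsRightSolvent (p d : ℕ) (A : Fin p → Mat d d) (R : Mat d d) : Prop :=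
  R ^ p + ∑ i : Fin p, A i * R ^ (p - 1 - (i : ℕ)) = 0

/-- The block Vandermonde matrix: the `(i,j)`-th `d×d` block is `S j ^ i` (0-indexed). -/
def vand (p d : ℕ) (S : Fin p → Mat d d) : Matrix (Fin p × Fin d) (Fin p × Fin d) ℂ :=
  fun x y => (S y.1 ^ (x.1 : ℕ)) x.2 y.2

/-- The block row `(e^{-phR_1}, …, e^{-phR_p})`. -/
noncomputable def expRow (p d : ℕ) (h : ℝ) (R : Fin p → Mat d d) :
    Matrix (Fin d) (Fin p × Fin d) ℂ :=
  fun a y => (NormedSpace.exp ((-((p : ℝ) * h) : ℂ) • R y.1)) a y.2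

/-!
Put `S k = e^{-hR_k}`. Since `e^{-phR_k} = (S k)^p`, the defining relation
`[Ψ_p, …, Ψ_1] V = -[(S 1)^p, …, (S p)^p]` says exactly that every `S k` is a right solvent of `Ψ`.
An eigenvector of a right solvent `S` for the eigenvalue `μ` is a null vector of `Ψ(μ)`, so
`σ(S k) ⊆ σ(Ψ)`. Conversely, if `Ψ(μ) v = 0`, solve `V y = (μ^i v)_i`: the solvent equations give
`∑_k (S k)^m y_k = μ^m v` also for `m = p`, so `V` kills `(S k y_k - μ y_k)_k`, and the blocks `y_k`,
which sum to `v ≠ 0`, are eigenvectors for `μ`. Hence `σ(Ψ) = ⋃ σ(S k)`, which is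
`e^{-hσ(A)}` by the spectral mapping theorem for the matrix exponential (`e^N` is a polynomial
in `N`). Finally `|e^{-hλ}| = e^{-h Re λ}`.
-/

open NormedSpace

namespace Matrix

variable {n : Type*} [Fintype n] [DecidableEq n]

theorem det_smul_one_sub_eq_zero_iff {K : Type*} [Field K] {M : Matrix n n K} {z : K} :
    det (z • (1 : Matrix n n K) - M) = 0 ↔ ∃ u ≠ 0, M *ᵥ u = z • u := by
  rw [← exists_mulVec_eq_zero_iff]
  simp only [sub_mulVec, smul_mulVec, one_mulVec, sub_eq_zero]
  exact exists_congr fun u => and_congr_right fun _ => eq_comm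

theorem mem_spectrum_iff_det_smul_one_sub_eq_zero {K : Type*} [Field K] {M : Matrix n n K}
    {z : K} : z ∈ spectrum K M ↔ det (z • (1 : Matrix n n K) - M) = 0 := by
  rw [spectrum.mem_iff, isUnit_iff_isUnit_det, isUnit_iff_ne_zero, not_ne_iff,
    Algebra.algebraMap_eq_smul_one]

theorem pow_mulVec_of_mulVec_eq_smul {R : Type*} [CommRing R] {N : Matrix n n R} {z : R}
    {u : n → R} (hu : N *ᵥ u = z • u) (k : ℕ) : (N ^ k) *ᵥ u = z ^ k • u := by
  induction k with
  | zero => simp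
  | succ k ih => rw [pow_succ', ← mulVec_mulVec, ih, mulVec_smul, hu, smul_smul, ← pow_succ]

theorem aeval_mulVec_of_mulVec_eq_smul {R : Type*} [CommRing R] {N : Matrix n n R} {z : R}
    {u : n → R} (hu : N *ᵥ u = z • u) (q : Polynomial R) :
    Polynomial.aeval N q *ᵥ u = q.eval z • u := by
  induction q using Polynomial.induction_on' with
  | add f g hf hg => rw [map_add, add_mulVec, hf, hg, Polynomial.eval_add, add_smul]
  | monomial k c =>
    rw [Polynomial.aeval_monomial, Polynomial.eval_monomial, ← mulVec_mulVec,
      pow_mulVec_of_mulVec_eq_smul hu, mulVec_smul, Algebra.algebraMap_eq_smul_one,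
      smul_mulVec, one_mulVec, smul_smul, mul_comm]

theorem exp_mulVec_of_mulVec_eq_smul {N : Matrix n n ℂ} {z : ℂ} {u : n → ℂ}
    (hu : N *ᵥ u = z • u) : exp N *ᵥ u = Complex.exp z • u := by
  let _ : NormedRing (Matrix n n ℂ) := Matrix.linftyOpNormedRing
  let _ : NormedAlgebra ℂ (Matrix n n ℂ) := Matrix.linftyOpNormedAlgebra
  have hN := (exp_series_hasSum_exp' (𝕂 := ℂ) N).map (mulVec.addMonoidHomLeft u)
    (continuous_id.matrix_mulVec continuous_const)
  have hz := (exp_series_hasSum_exp' (𝕂 := ℂ) z).smul_const u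
  rw [← Complex.exp_eq_exp_ℂ] at hz
  refine hN.unique (hz.congr_fun fun k => ?_)
  simp only [Function.comp_apply, mulVec.addMonoidHomLeft, AddMonoidHom.coe_mk, ZeroHom.coe_mk,
    smul_mulVec, pow_mulVec_of_mulVec_eq_smul hu, smul_smul, smul_eq_mul]

theorem exp_mem_adjoin_singleton (N : Matrix n n ℂ) : exp N ∈ Algebra.adjoin ℂ {N} :=
  exp_mem (R := ℂ) (s := Algebra.adjoin ℂ {N})
    (Subalgebra.toSubmodule (Algebra.adjoin ℂ {N})).closed_of_finiteDimensional
    (Algebra.self_mem_adjoin_singleton ℂ N)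

theorem spectrum_exp (N : Matrix n n ℂ) : spectrum ℂ (exp N) = Complex.exp '' spectrum ℂ N := by
  rcases isEmpty_or_nonempty n with hn | hn
  · simp [spectrum.of_subsingleton]
  obtain ⟨q, hq⟩ : ∃ q : Polynomial ℂ, Polynomial.aeval N q = exp N := by
    simpa [Algebra.adjoin_singleton_eq_range_aeval] using exp_mem_adjoin_singleton N
  rw [← hq, spectrum.map_polynomial_aeval_of_nonempty N q
    (spectrum.nonempty_of_isAlgClosed_of_finiteDimensional ℂ N)]
  refine Set.image_congr fun z hz => ?_
  -- `q` agrees with `exp` at an eigenvalue, as one sees by applying both to an eigenvector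
  obtain ⟨u, hu0, hu⟩ :=
    (mem_spectrum_iff_det_smul_one_sub_eq_zero.trans det_smul_one_sub_eq_zero_iff).mp hz
  exact smul_left_injective ℂ hu0
    ((aeval_mulVec_of_mulVec_eq_smul hu q).symm.trans (hq ▸ exp_mulVec_of_mulVec_eq_smul hu))

theorem det_smul_one_sub_exp_smul_eq_zero_iff {c : ℂ} (hc : c ≠ 0) (N : Matrix n n ℂ) (μ : ℂ) :
    det (μ • (1 : Matrix n n ℂ) - exp (c • N)) = 0 ↔
      ∃ z, det (z • (1 : Matrix n n ℂ) - N) = 0 ∧ μ = Complex.exp (c * z) := by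
  simp only [← mem_spectrum_iff_det_smul_one_sub_eq_zero, spectrum_exp, ← Units.smul_mk0 hc,
    spectrum.unit_smul_eq_smul, Set.mem_image, Set.mem_smul_set]
  simp [eq_comm]

end Matrix

section LambdaMatrix

variable {p d : ℕ}

theorem monicPoly_mulVec (Ψ : Fin p → Mat d d) (μ : ℂ) (v : Fin d → ℂ) :
    monicPoly p d Ψ μ *ᵥ v = μ ^ p • v + ∑ i : Fin p, μ ^ (p - 1 - (i : ℕ)) • Ψ i *ᵥ v := by
  simp only [monicPoly, add_mulVec, smul_mulVec, one_mulVec, sum_mulVec]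

theorem IsRightSolvent.monicPoly_mulVec_eq_zero {Ψ : Fin p → Mat d d} {S : Mat d d}
    (hS : IsRightSolvent p d Ψ S) {μ : ℂ} {u : Fin d → ℂ} (hu : S *ᵥ u = μ • u) :
    monicPoly p d Ψ μ *ᵥ u = 0 := by
  have h := congrArg (· *ᵥ u) hS
  simp only [add_mulVec, sum_mulVec, ← mulVec_mulVec, pow_mulVec_of_mulVec_eq_smul hu,
    mulVec_smul, zero_mulVec] at h
  rwa [monicPoly_mulVec]

theorem vand_mulVec_uncurry_apply (S : Fin p → Mat d d) (w : Fin p → Fin d → ℂ) (i : Fin p)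
    (a : Fin d) :
    (vand p d S *ᵥ Function.uncurry w) (i, a) = (∑ l, S l ^ (i : ℕ) *ᵥ w l) a := by
  simp only [mulVec, dotProduct, Fintype.sum_prod_type, vand, Function.uncurry_apply_pair,
    Finset.sum_apply]

theorem sum_pow_mulVec_eq_of_isRightSolvent {Ψ S : Fin p → Mat d d}
    (hS : ∀ l, IsRightSolvent p d Ψ (S l)) {μ : ℂ} {v : Fin d → ℂ}
    (hv : monicPoly p d Ψ μ *ᵥ v = 0) {w : Fin p → Fin d → ℂ}
    (hw : ∀ m < p, ∑ l, S l ^ m *ᵥ w l = μ ^ m • v) :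
    ∑ l, S l ^ p *ᵥ w l = μ ^ p • v := by
  have hSp : ∀ l, S l ^ p = -∑ i : Fin p, Ψ i * S l ^ (p - 1 - (i : ℕ)) :=
    fun l => eq_neg_of_add_eq_zero_left (hS l)
  rw [monicPoly_mulVec, add_eq_zero_iff_eq_neg] at hv
  simp_rw [hSp, neg_mulVec, sum_mulVec, ← mulVec_mulVec, Finset.sum_neg_distrib]
  rw [Finset.sum_comm, hv]
  congr 1
  refine Finset.sum_congr rfl fun i _ => ?_
  rw [← mulVec_sum, hw _ (by omega), mulVec_smul]

theorem exists_mulVec_eq_smul_of_isUnit_vand {Ψ S : Fin p → Mat d d}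
    (hS : ∀ l, IsRightSolvent p d Ψ (S l)) (hV : IsUnit (vand p d S)) {μ : ℂ}
    {v : Fin d → ℂ} (hv0 : v ≠ 0) (hv : monicPoly p d Ψ μ *ᵥ v = 0) :
    ∃ l, ∃ u ≠ 0, S l *ᵥ u = μ • u := by
  obtain ⟨y, hy⟩ := mulVec_surjective_iff_isUnit.mpr hV fun q => μ ^ (q.1 : ℕ) * v q.2
  set w : Fin p → Fin d → ℂ := Function.curry y
  have hlt : ∀ m < p, ∑ l, S l ^ m *ᵥ w l = μ ^ m • v := fun m hm => funext fun a => by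
    rw [← vand_mulVec_uncurry_apply S w ⟨m, hm⟩ a]
    simpa [w] using congrFun hy (⟨m, hm⟩, a)
  have hmom : ∀ m ≤ p, ∑ l, S l ^ m *ᵥ w l = μ ^ m • v := fun m hm =>
    hm.lt_or_eq.elim (hlt m) fun h => h ▸ sum_pow_mulVec_eq_of_isRightSolvent hS hv hlt
  have hdefect : vand p d S *ᵥ Function.uncurry (fun l => S l *ᵥ w l - μ • w l) = 0 := by
    ext ⟨i, a⟩
    rw [vand_mulVec_uncurry_apply]
    simp only [mulVec_sub, mulVec_smul, mulVec_mulVec, ← pow_succ, Finset.sum_sub_distrib,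
      ← Finset.smul_sum, hmom _ i.isLt, hmom _ i.isLt.le, smul_smul, ← pow_succ', sub_self, Pi.zero_apply]
  have heig : ∀ l, S l *ᵥ w l = μ • w l := by
    have h := mulVec_injective_iff_isUnit.mpr hV (hdefect.trans (mulVec_zero _).symm)
    exact fun l => sub_eq_zero.mp (funext fun c => congrFun h (l, c))
  have hsum : ∑ l, w l = v := by simpa using hmom 0 p.zero_le
  obtain ⟨l, -, hl⟩ := Finset.exists_ne_zero_of_sum_ne_zero (hsum ▸ hv0)
  exact ⟨l, w l, hl, heig l⟩

theorem det_monicPoly_eq_zero_iff_of_isUnit_vand {Ψ S : Fin p → Mat d d}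
    (hS : ∀ l, IsRightSolvent p d Ψ (S l)) (hV : IsUnit (vand p d S)) (μ : ℂ) :
    det (monicPoly p d Ψ μ) = 0 ↔ ∃ l, det (μ • (1 : Mat d d) - S l) = 0 := by
  rw [← exists_mulVec_eq_zero_iff]
  simp only [det_smul_one_sub_eq_zero_iff]
  constructor
  · rintro ⟨v, hv0, hv⟩
    exact exists_mulVec_eq_smul_of_isUnit_vand hS hV hv0 hv
  · rintro ⟨l, u, hu0, hu⟩
    exact ⟨u, hu0, (hS l).monicPoly_mulVec_eq_zero hu⟩

theorem sum_rev_mul_pow_eq (Ψ : Fin p → Mat d d) (S : Mat d d) :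
    ∑ j : Fin p, Ψ j.rev * S ^ (j : ℕ) = ∑ i : Fin p, Ψ i * S ^ (p - 1 - (i : ℕ)) := by
  rw [← Equiv.sum_comp Fin.revPerm]
  refine Finset.sum_congr rfl fun j _ => ?_
  simp only [Fin.revPerm_apply, Fin.rev_rev, Fin.val_rev]
  congr 2
  omega

theorem isRightSolvent_of_eq_neg_mul_vand_inv {Ψ S : Fin p → Mat d d}
    (hV : IsUnit (vand p d S)) {E : Matrix (Fin d) (Fin p × Fin d) ℂ}
    (hE : ∀ a k b, E a (k, b) = (S k ^ p) a b)
    (hΨ : ∀ (j : Fin p) (a b : Fin d), Ψ j.rev a b = (-(E * (vand p d S)⁻¹)) a (j, b))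
    (k : Fin p) : IsRightSolvent p d Ψ (S k) := by
  set P : Matrix (Fin d) (Fin p × Fin d) ℂ := of fun a y => Ψ y.1.rev a y.2
  have hPV : P * vand p d S = -E := by
    have hP : P = -(E * (vand p d S)⁻¹) := by ext a ⟨j, b⟩; exact hΨ j a b
    rw [hP, Matrix.neg_mul, Matrix.mul_assoc, nonsing_inv_mul _ ((isUnit_iff_isUnit_det _).mp hV),
      Matrix.mul_one]
  have hrow : ∑ j : Fin p, Ψ j.rev * S k ^ (j : ℕ) = -(S k ^ p) := by
    ext a b
    have h := congrFun (congrFun hPV a) (k, b)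
    simp only [mul_apply, Fintype.sum_prod_type, P, of_apply, vand, Matrix.neg_apply, hE] at h
    simpa [Matrix.sum_apply, mul_apply] using h
  rw [IsRightSolvent, ← sum_rev_mul_pow_eq, hrow, add_neg_cancel]

end LambdaMatrix

theorem stmt_6_general (p d : ℕ) (h : ℝ) (hh : 0 < h)
    (A : Fin p → Mat d d) (R : Fin p → Mat d d)
    -- `σ(A(·)) = ⋃_{k=1}^p σ(R_k)`
    (hspec : ∀ z : ℂ, det (monicPoly p d A z) = 0 ↔
      ∃ k : Fin p, det (z • (1 : Mat d d) - R k) = 0)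
    (hV : IsUnit (vand p d (fun k => NormedSpace.exp ((-h : ℂ) • R k))))
    -- `[Ψ_p, …, Ψ_1] = -[e^{-phR_1}, …, e^{-phR_p}] V(e^{-hR_1},…,e^{-hR_p})⁻¹`,
    -- i.e. the `j`-th block column (0-indexed) of the right-hand side is `Ψ_{p-j}`,
    -- i.e. `Ψ j.rev` with `Ψ i = Ψ_{i+1}`
    (Ψ : Fin p → Mat d d)
    (hΨ : ∀ (j : Fin p) (a b : Fin d),
      Ψ j.rev a b =
        (-(expRow p d h R *
            (vand p d (fun k => NormedSpace.exp ((-h : ℂ) • R k)))⁻¹)) a (j, b)) :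
    -- `σ(Ψ(·)) = {e^{-hλ} : λ ∈ σ(A(·))}`
    (∀ μ : ℂ, det (monicPoly p d Ψ μ) = 0 ↔
      ∃ z : ℂ, det (monicPoly p d A z) = 0 ∧ μ = Complex.exp (-(h : ℂ) * z)) ∧
    -- in particular, `Re λ < 0` on `σ(A(·))` implies `Ψ(λ)` is Schur-stable
    ((∀ z : ℂ, det (monicPoly p d A z) = 0 → z.re < 0) →
      ∀ μ : ℂ, det (monicPoly p d Ψ μ) = 0 → 1 < ‖μ‖) := by
  have hexpRow : ∀ a k b, expRow p d h R a (k, b) = (exp ((-h : ℂ) • R k) ^ p) a b := by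
    intro a k b
    rw [expRow, ← Matrix.exp_nsmul, ← Nat.cast_smul_eq_nsmul ℂ, smul_smul, mul_neg]
    push_cast
    rfl
  have hsolv := isRightSolvent_of_eq_neg_mul_vand_inv hV hexpRow hΨ
  have hh0 : (-h : ℂ) ≠ 0 := by simpa using hh.ne'
  have hspecΨ : ∀ μ : ℂ, det (monicPoly p d Ψ μ) = 0 ↔
      ∃ z : ℂ, det (monicPoly p d A z) = 0 ∧ μ = Complex.exp (-(h : ℂ) * z) := by
    intro μ
    simp only [det_monicPoly_eq_zero_iff_of_isUnit_vand hsolv hV,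
      det_smul_one_sub_exp_smul_eq_zero_iff hh0, hspec]
    exact ⟨fun ⟨l, z, hz, hμ⟩ => ⟨z, ⟨l, hz⟩, hμ⟩, fun ⟨z, ⟨l, hz⟩, hμ⟩ => ⟨l, z, hz, hμ⟩⟩
  refine ⟨hspecΨ, fun hre μ hμ => ?_⟩
  obtain ⟨z, hz, rfl⟩ := (hspecΨ μ).mp hμ
  rw [Complex.norm_exp, Real.one_lt_exp_iff]
  simpa [Complex.mul_re] using mul_pos hh (neg_pos.mpr (hre z hz))

theorem stmt_6 (p d : ℕ) (hp : 0 < p) (hd : 0 < d) (h : ℝ) (hh : 0 < h)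
    (A : Fin p → Mat d d) (R : Fin p → Mat d d)
    (hR : ∀ k, IsRightSolvent p d A (R k))
    -- `σ(A(·)) = ⋃_{k=1}^p σ(R_k)`
    (hspec : ∀ z : ℂ, det (monicPoly p d A z) = 0 ↔
      ∃ k : Fin p, det (z • (1 : Mat d d) - R k) = 0)
    (hV : IsUnit (vand p d (fun k => NormedSpace.exp ((-h : ℂ) • R k))))
    -- `[Ψ_p, …, Ψ_1] = -[e^{-phR_1}, …, e^{-phR_p}] V(e^{-hR_1},…,e^{-hR_p})⁻¹`,
    -- i.e. the `j`-th block column (0-indexed) of the right-hand side is `Ψ_{p-j}`,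
    -- i.e. `Ψ j.rev` with `Ψ i = Ψ_{i+1}`
    (Ψ : Fin p → Mat d d)
    (hΨ : ∀ (j : Fin p) (a b : Fin d),
      Ψ j.rev a b =
        (-(expRow p d h R *
            (vand p d (fun k => NormedSpace.exp ((-h : ℂ) • R k)))⁻¹)) a (j, b)) :
    -- `σ(Ψ(·)) = {e^{-hλ} : λ ∈ σ(A(·))}`
    (∀ μ : ℂ, det (monicPoly p d Ψ μ) = 0 ↔
      ∃ z : ℂ, det (monicPoly p d A z) = 0 ∧ μ = Complex.exp (-(h : ℂ) * z)) ∧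
    -- in particular, `Re λ < 0` on `σ(A(·))` implies `Ψ(λ)` is Schur-stable
    ((∀ z : ℂ, det (monicPoly p d A z) = 0 → z.re < 0) →
      ∀ μ : ℂ, det (monicPoly p d Ψ μ) = 0 → 1 < ‖μ‖) :=
  stmt_6_general p d h hh A R hspec hV Ψ hΨ
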